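/- arXiv:1705.02711 — 2 statements merged into one kernel-verified Lean document; each statement's English description precedes it below -/
import Mathlib

section
/- Let ε, r ∈ (0,1) with ε + r < 1, and set C = r/((ε+r)·Γ(1−ε−r)). If a real sequence (y_t)_{t≥1} satisfies y_1 = 1 and y_{t+1} = (1 + 1/t)·y_t + C·Γ(t+1−ε−r)/Γ(t+1) + ε/(ε+r) for all t ≥ 1, then lim_{t→∞} y_t / (t·log t) = ε/(ε+r). -/
/-!
With `s = ε + r`, `K = ε / s` and `b t = Γ(t + 1 - s) / Γ(t + 1)`, the sequence `z t = y t / t`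
satisfies `z (t + 1) = z t + C b t / (t + 1) + K / (t + 1)`. Since `b t - b (t + 1) = s b t / (t + 1)`,
the Gamma term telescopes: `z t + (C / s) b t - K H_t` is constant. As `b` is positive and
decreasing, `z t = K H_t + O(1) = K log t + O(1)`.
-/

open Real Filter Topology

theorem tendsto_log_natCast_atTop : Tendsto (fun n : ℕ => log n) atTop atTop :=
  tendsto_log_atTop.comp tendsto_natCast_atTop_atTop

theorem tendsto_harmonic_div_log :
    Tendsto (fun n : ℕ => (harmonic n : ℝ) / log n) atTop (𝓝 1) := by
  have hlog := tendsto_log_natCast_atTop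
  have h := (tendsto_harmonic_sub_log.div_atTop hlog).add_const 1
  rw [zero_add] at h
  refine h.congr' ?_
  filter_upwards [hlog.eventually_gt_atTop 0] with n hn
  field_simp
  ring

theorem tendsto_div_log_of_abs_sub_harmonic_le {z : ℕ → ℝ} {K M : ℝ}
    (hz : ∀ᶠ n in atTop, |z n - K * harmonic n| ≤ M) :
    Tendsto (fun n => z n / log n) atTop (𝓝 K) := by
  have hlog := tendsto_log_natCast_atTop
  have hsmall : Tendsto (fun n => (z n - K * harmonic n) / log n) atTop (𝓝 0) := by
    refine squeeze_zero_norm' ?_ ((tendsto_const_nhds (x := M)).div_atTop hlog)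
    filter_upwards [hz, hlog.eventually_gt_atTop 0] with n hn hpos
    rw [norm_div, norm_of_nonneg hpos.le, Real.norm_eq_abs]
    gcongr
  have h := hsmall.add (tendsto_harmonic_div_log.const_mul K)
  rw [zero_add, mul_one] at h
  refine h.congr' ?_
  filter_upwards [hlog.eventually_gt_atTop 0] with n hn
  field_simp
  ring

noncomputable def gammaRatio (s x : ℝ) : ℝ := Gamma (x + 1 - s) / Gamma (x + 1)

section gammaRatio

variable {s x : ℝ}

theorem gammaRatio_pos (hs : s < x + 1) (hx : -1 < x) : 0 < gammaRatio s x :=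
  div_pos (Gamma_pos_of_pos (by linarith)) (Gamma_pos_of_pos (by linarith))

theorem gammaRatio_sub_gammaRatio_add_one (hs : x + 1 - s ≠ 0) (hx : 0 < x + 1) :
    gammaRatio s x - gammaRatio s (x + 1) = s * gammaRatio s x / (x + 1) := by
  have hΓ := (Gamma_pos_of_pos hx).ne'
  unfold gammaRatio
  rw [show x + 1 + 1 - s = (x + 1 - s) + 1 by ring, Gamma_add_one hs, Gamma_add_one hx.ne']
  field_simp
  ring

theorem gammaRatio_add_one_le (hs₀ : 0 ≤ s) (hs : s < x + 1) :
    gammaRatio s (x + 1) ≤ gammaRatio s x := by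
  have hx : 0 < x + 1 := by linarith
  have h := gammaRatio_sub_gammaRatio_add_one (s := s) (by linarith) hx
  have : 0 ≤ s * gammaRatio s x / (x + 1) :=
    div_nonneg (mul_nonneg hs₀ (gammaRatio_pos hs (by linarith)).le) hx.le
  linarith

theorem gammaRatio_natCast_pos (hs : s < 2) {n : ℕ} (hn : 1 ≤ n) : 0 < gammaRatio s n := by
  have : (1 : ℝ) ≤ n := by exact_mod_cast hn
  exact gammaRatio_pos (by linarith) (by linarith)

theorem gammaRatio_natCast_le_gammaRatio_one (hs₀ : 0 ≤ s) (hs : s < 2) {n : ℕ} (hn : 1 ≤ n) :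
    gammaRatio s n ≤ gammaRatio s 1 := by
  induction n, hn using Nat.le_induction with
  | base => simp
  | succ n hn ih =>
    have : (1 : ℝ) ≤ n := by exact_mod_cast hn
    push_cast
    exact (gammaRatio_add_one_le hs₀ (by linarith)).trans ih

end gammaRatio

theorem div_add_gammaRatio_sub_harmonic_eq {y : ℕ → ℝ} {s C K : ℝ} (hs₀ : s ≠ 0) (hs : s < 2)
    (hrec : ∀ t : ℕ, 1 ≤ t → y (t + 1) = (1 + 1 / t) * y t + C * gammaRatio s t + K)
    {n : ℕ} (hn : 1 ≤ n) :
    y n / n + C / s * gammaRatio s n - K * harmonic n = y 1 + C / s * gammaRatio s 1 - K := by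
  induction n, hn using Nat.le_induction with
  | base => simp
  | succ n hn ih =>
    have hn' : (1 : ℝ) ≤ n := by exact_mod_cast hn
    have hb := gammaRatio_sub_gammaRatio_add_one (s := s) (x := n) (by linarith) (by linarith)
    rw [← ih, hrec n hn, harmonic_succ]
    push_cast
    rw [show gammaRatio s (n + 1) = gammaRatio s n - s * gammaRatio s n / (n + 1) by linarith]
    field_simp
    ring

theorem erws_critical_tlogt_general (ε r : ℝ) (hε : ε ∈ Set.Ioo (0:ℝ) 1)
    (hr : r ∈ Set.Ioo (0:ℝ) 1) (C : ℝ) (y : ℕ → ℝ)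
    (hrec : ∀ t : ℕ, 1 ≤ t → y (t + 1) = (1 + 1 / t) * y t
      + C * Real.Gamma ((t : ℝ) + 1 - ε - r) / Real.Gamma ((t : ℝ) + 1) + ε / (ε + r)) :
    Tendsto (fun t : ℕ => y t / ((t : ℝ) * Real.log t)) atTop (nhds (ε / (ε + r))) := by
  obtain ⟨hε₀, hε₁⟩ := hε
  obtain ⟨hr₀, hr₁⟩ := hr
  set s := ε + r
  have hs₀ : 0 < s := by positivity
  have hs : s < 2 := by linarith
  have hrec' (t : ℕ) (ht : 1 ≤ t) :
      y (t + 1) = (1 + 1 / t) * y t + C * gammaRatio s t + ε / s := by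
    rw [hrec t ht, gammaRatio, mul_div_assoc, sub_sub]
  set c := y 1 + C / s * gammaRatio s 1 - ε / s
  have hbound : ∀ᶠ n : ℕ in atTop,
      |y n / n - ε / s * harmonic n| ≤ |c| + |C / s| * gammaRatio s 1 := by
    filter_upwards [eventually_ge_atTop 1] with n hn
    have hinv := div_add_gammaRatio_sub_harmonic_eq hs₀.ne' hs hrec' hn
    have hb₀ := gammaRatio_natCast_pos hs hn
    have hb₁ := gammaRatio_natCast_le_gammaRatio_one hs₀.le hs hn
    calc |y n / n - ε / s * harmonic n| = |c - C / s * gammaRatio s n| := by congr 1; linarith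
      _ ≤ |c| + |C / s * gammaRatio s n| := abs_sub _ _
      _ = |c| + |C / s| * gammaRatio s n := by rw [abs_mul, abs_of_pos hb₀]
      _ ≤ |c| + |C / s| * gammaRatio s 1 := by gcongr
  simpa only [div_div] using tendsto_div_log_of_abs_sub_harmonic_le hbound

theorem erws_critical_tlogt (ε r : ℝ) (hε : ε ∈ Set.Ioo (0:ℝ) 1)
    (hr : r ∈ Set.Ioo (0:ℝ) 1) (hsum : ε + r < 1)
    (C : ℝ) (hC : C = r / ((ε + r) * Real.Gamma (1 - ε - r)))
    (y : ℕ → ℝ) (hy1 : y 1 = 1)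
    (hrec : ∀ t : ℕ, 1 ≤ t → y (t + 1) = (1 + 1 / t) * y t
      + C * Real.Gamma ((t : ℝ) + 1 - ε - r) / Real.Gamma ((t : ℝ) + 1) + ε / (ε + r)) :
    Tendsto (fun t : ℕ => y t / ((t : ℝ) * Real.log t)) atTop (nhds (ε / (ε + r))) :=
  erws_critical_tlogt_general ε r hε hr C y hrec
end

section
/- Let ε ∈ (0,1) and r ∈ (0,1/2) with ε + r < 1, set γ = (1−ε)/2 and C = r/((ε+r)·Γ(1−ε−r)). If a real sequence (y_t)_{t≥1} satisfies y_1 = 1 and y_{t+1} = (1 + 2γ/t)·y_t + C·Γ(t+1−ε−r)/Γ(t+1) + ε/(ε+r) for all t ≥ 1, then lim_{t→∞} y_t / t = 1/(ε+r). Consequently this diffusivity converges, as ε → 0⁺, to the un-perturbed diffusivity 1/r, so no residual diffusivity arises for γ = (1−ε)/2. -/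
/-!
The recurrence has the explicit solution `y t = t / (ε + r) - (C / r) Γ(t + 1 - ε - r) / Γ(t)`,
so `y t / t = 1 / (ε + r) - (C / r) Γ(t + 1 - ε - r) / Γ(t + 1)`. By log-convexity of `Γ`
(Gautschi's inequality) the last ratio is at most `t ^ (-(ε + r))`, which tends to `0`.
-/

open Real Filter Topology

namespace Real

theorem Gamma_add_one_sub_div_Gamma_add_one_le_rpow_neg {s x : ℝ} (hs₀ : 0 < s) (hs₁ : s < 1)
    (hx : 0 < x) : Gamma (x + 1 - s) / Gamma (x + 1) ≤ x ^ (-s) := by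
  have hΓx := Gamma_pos_of_pos hx
  have hΓx₁ := Gamma_pos_of_pos (by linarith : 0 < x + 1)
  have hlogConvex : Gamma (x + 1 - s) ≤ Gamma x ^ s * Gamma (x + 1) ^ (1 - s) := by
    convert Gamma_mul_add_mul_le_rpow_Gamma_mul_rpow_Gamma (b := 1 - s) hx
      (by linarith : 0 < x + 1) hs₀ (by linarith) (by ring) using 2
    ring
  calc Gamma (x + 1 - s) / Gamma (x + 1)
      ≤ Gamma x ^ s * Gamma (x + 1) ^ (1 - s) / Gamma (x + 1) := by gcongr
    _ = x ^ (-s) := by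
      rw [rpow_sub hΓx₁, rpow_one, Gamma_add_one hx.ne', mul_rpow hx.le hΓx.le, rpow_neg hx.le]
      field_simp

theorem tendsto_Gamma_add_one_sub_div_Gamma_add_one_atTop {s : ℝ} (hs₀ : 0 < s) (hs₁ : s < 1) :
    Tendsto (fun x => Gamma (x + 1 - s) / Gamma (x + 1)) atTop (𝓝 0) := by
  refine squeeze_zero' ?_ ?_ (tendsto_rpow_neg_atTop hs₀)
  · filter_upwards [eventually_gt_atTop 0] with x hx
    exact div_nonneg (Gamma_pos_of_pos (by linarith)).le (Gamma_pos_of_pos (by linarith)).le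
  · filter_upwards [eventually_gt_atTop 0] with x hx
    exact Gamma_add_one_sub_div_Gamma_add_one_le_rpow_neg hs₀ hs₁ hx

end Real

/-- Closed form of the second moment: the constant forcing `ε / (ε + r)` is absorbed by the linear
term, the forcing `C Γ(t + 1 - ε - r) / Γ(t + 1)` by the multiple of `Γ(t + 1 - ε - r) / Γ(t)`. -/
noncomputable def erwsSecondMoment (ε r C t : ℝ) : ℝ :=
  t / (ε + r) - C / r * (Gamma (t + 1 - ε - r) / Gamma t)

theorem erwsSecondMoment_add_one {ε r C t : ℝ} (hr : r ≠ 0) (ht : 0 < t)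
    (hne : t + 1 - ε - r ≠ 0) :
    erwsSecondMoment ε r C (t + 1) = (1 + (1 - ε) / t) * erwsSecondMoment ε r C t
      + C * Gamma (t + 1 - ε - r) / Gamma (t + 1) + ε / (ε + r) := by
  have hΓt := (Gamma_pos_of_pos ht).ne'
  have hshift : t + 1 + 1 - ε - r = (t + 1 - ε - r) + 1 := by ring
  simp only [erwsSecondMoment]
  rw [hshift, Gamma_add_one hne, Gamma_add_one ht.ne']
  field_simp
  ring

theorem erwsSecondMoment_one {ε r : ℝ} (hr : r ≠ 0) (hs₀ : 0 < ε + r) (hs₁ : ε + r < 1) :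
    erwsSecondMoment ε r (r / ((ε + r) * Gamma (1 - ε - r))) 1 = 1 := by
  have hΓ := (Gamma_pos_of_pos (by linarith : 0 < 1 - ε - r)).ne'
  have hshift : (1 : ℝ) + 1 - ε - r = (1 - ε - r) + 1 := by ring
  simp only [erwsSecondMoment]
  rw [hshift, Gamma_add_one (by linarith), Gamma_one]
  field_simp
  ring

theorem tendsto_erwsSecondMoment_div_self {ε r C : ℝ} (hs₀ : 0 < ε + r) (hs₁ : ε + r < 1) :
    Tendsto (fun t => erwsSecondMoment ε r C t / t) atTop (𝓝 (1 / (ε + r))) := by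
  have hratio := (tendsto_Gamma_add_one_sub_div_Gamma_add_one_atTop hs₀ hs₁).const_mul (C / r)
  rw [mul_zero] at hratio
  rw [← sub_zero (1 / (ε + r))]
  refine (tendsto_const_nhds.sub hratio).congr' ?_
  filter_upwards [eventually_gt_atTop 0] with t ht
  have hΓt := (Gamma_pos_of_pos ht).ne'
  simp only [erwsSecondMoment, Gamma_add_one ht.ne', ← sub_sub]
  field_simp

theorem erws_no_residual_diffusivity (ε r : ℝ) (hε : ε ∈ Set.Ioo (0:ℝ) 1)
    (hr : r ∈ Set.Ioo (0:ℝ) (1/2)) (hsum : ε + r < 1)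
    (γ : ℝ) (hγ : γ = (1 - ε) / 2)
    (C : ℝ) (hC : C = r / ((ε + r) * Real.Gamma (1 - ε - r)))
    (y : ℕ → ℝ) (hy1 : y 1 = 1)
    (hrec : ∀ t : ℕ, 1 ≤ t → y (t + 1) = (1 + 2 * γ / t) * y t
      + C * Real.Gamma ((t : ℝ) + 1 - ε - r) / Real.Gamma ((t : ℝ) + 1) + ε / (ε + r)) :
    Tendsto (fun t : ℕ => y t / t) atTop (nhds (1 / (ε + r)))
    ∧ Tendsto (fun e : ℝ => 1 / (e + r)) (nhdsWithin 0 (Set.Ioi 0)) (nhds (1 / r)) := by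
  obtain ⟨hε₀, -⟩ := hε
  obtain ⟨hr₀, -⟩ := hr
  have hs₀ : 0 < ε + r := by linarith
  have hclosed : ∀ t : ℕ, 1 ≤ t → y t = erwsSecondMoment ε r C t := by
    intro t ht
    induction t, ht using Nat.le_induction with
    | base => rw [hy1, hC, Nat.cast_one, erwsSecondMoment_one hr₀.ne' hs₀ hsum]
    | succ t ht ih =>
      have ht₀ : (0 : ℝ) < t := by exact_mod_cast ht
      rw [hrec t ht, ih, Nat.cast_succ, erwsSecondMoment_add_one hr₀.ne' ht₀ (by linarith), hγ,
        mul_div_cancel₀ _ two_ne_zero]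
  refine ⟨?_, ?_⟩
  · refine ((tendsto_erwsSecondMoment_div_self (C := C) hs₀ hsum).comp
      tendsto_natCast_atTop_atTop).congr' ?_
    filter_upwards [eventually_ge_atTop 1] with t ht
    rw [Function.comp_apply, hclosed t ht]
  · have hcont : ContinuousAt (fun e : ℝ => 1 / (e + r)) 0 :=
      continuousAt_const.div (continuousAt_id.add continuousAt_const) (by simpa using hr₀.ne')
    simpa using hcont.tendsto.mono_left nhdsWithin_le_nhds
end
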